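/- arXiv:0911.4109 — 2 statements merged into one kernel-verified Lean document; each statement's English description precedes it below -/
import Mathlib

section
/- Highest-order transport-type estimate: Let $f, g : \mathbb{R}^2 \to \mathbb{R}$ be differentiable with $\nabla f$ and $\nabla g$ bounded, $D := \sup_{x,y} d(f,g)(x,y) < \infty$, and suppose the fourth partial derivative $\partial_{x_1}^4 f$ exists and lies in $L^2(\mathbb{R}^2)$. Then there is a universal constant $C$ such that $\int_{\mathbb{R}^2} \int_{\mathbb{R}^2} |\partial_{x_1}^4 f(x)|^2 \, \frac{|f(x) - g(x-y)| \, |(\nabla f(x) - \nabla g(x-y)) \cdot y|}{[|y|^2 + (f(x) - g(x-y))^2]^{5/2}}\, dx\, dy \le C\, \|\partial_{x_1}^4 f\|_{L^2}^2 \, \big(\sup_x|\nabla f(x)| + \sup_x|\nabla g(x)|\big)(D^3 + 1)$. -/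
open MeasureTheory Filter Topology Real Set
open scoped RealInnerProductSpace ENNReal

noncomputable section

abbrev E2 := EuclideanSpace ℝ (Fin 2)

/-- `d(f,g)(x,y) = [|y|² + (f(x)-g(x-y))²]^{-1/2}`. -/
def dd (f g : E2 → ℝ) (x y : E2) : ℝ :=
  (‖y‖ ^ 2 + (f x - g (x - y)) ^ 2) ^ (-(1 / 2 : ℝ))

/-- The `L²(ℝ²)` norm of a function. -/
def l2norm (h : E2 → ℝ) : ℝ := (∫ x : E2, (h x) ^ 2) ^ (1 / 2 : ℝ)

/-- The partial derivative `∂_{x₁}`. -/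
def pd1 (h : E2 → ℝ) (x : E2) : ℝ := fderiv ℝ h x (EuclideanSpace.single 0 1)

/-- The fourth partial derivative `∂⁴_{x₁}`. -/
def pd1four (f : E2 → ℝ) : E2 → ℝ := pd1 (pd1 (pd1 (pd1 f)))

/-! With `w = d(f,g)(x,y)`, the kernel is at most `|∇f(x) - ∇g(x-y)| w³`, because both
`|f(x) - g(x-y)| w` and `|y| w` are at most `1`. Since also `w ≤ D`, `w (1 + |y|) ≤ D + 1`,
so `w³ ≲ (D³ + 1)(1 + |y|)⁻³`, which is integrable over `ℝ²`. The double integral therefore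
splits into `‖∂⁴_{x₁}f‖²_{L²}` times a finite constant. -/

lemma abs_mul_rpow_neg_half_le_one (a b : ℝ) : |a| * (a ^ 2 + b ^ 2) ^ (-(1 / 2 : ℝ)) ≤ 1 := by
  rcases (add_nonneg (sq_nonneg a) (sq_nonneg b)).eq_or_lt with hq | hq
  · rw [← hq, zero_rpow (by norm_num), mul_zero]
    exact zero_le_one
  · rw [rpow_neg hq.le, ← sqrt_eq_rpow, ← div_eq_mul_inv, div_le_one (sqrt_pos.mpr hq),
      ← sqrt_sq_eq_abs]
    exact sqrt_le_sqrt (le_add_of_nonneg_right (sq_nonneg b))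

lemma div_rpow_five_halves_eq_mul_pow (c q : ℝ) (hq : 0 ≤ q) :
    c / q ^ (5 / 2 : ℝ) = c * (q ^ (-(1 / 2 : ℝ))) ^ 5 := by
  rw [← rpow_natCast, ← rpow_mul hq, div_eq_mul_inv, ← rpow_neg hq]
  norm_num

lemma abs_mul_abs_inner_div_rpow_le {E : Type*} [NormedAddCommGroup E] [InnerProductSpace ℝ E]
    (a : ℝ) (v y : E) :
    |a| * |⟪v, y⟫| / (‖y‖ ^ 2 + a ^ 2) ^ (5 / 2 : ℝ) ≤
      ‖v‖ * ((‖y‖ ^ 2 + a ^ 2) ^ (-(1 / 2 : ℝ))) ^ 3 := by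
  set w := (‖y‖ ^ 2 + a ^ 2) ^ (-(1 / 2 : ℝ))
  have hw : 0 ≤ w := by positivity
  have haw : |a| * w ≤ 1 := by
    simpa only [w, add_comm] using abs_mul_rpow_neg_half_le_one a ‖y‖
  have hyw : ‖y‖ * w ≤ 1 := by
    simpa only [abs_norm] using abs_mul_rpow_neg_half_le_one ‖y‖ a
  have hinner : |⟪v, y⟫| ≤ ‖v‖ * ‖y‖ := abs_real_inner_le_norm v y
  rw [div_rpow_five_halves_eq_mul_pow _ _ (by positivity)]
  calc |a| * |⟪v, y⟫| * w ^ 5 ≤ (|a| * w) * (‖v‖ * (‖y‖ * w)) * w ^ 3 := by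
        have := mul_le_mul_of_nonneg_right hinner (pow_nonneg hw 5)
        nlinarith [abs_nonneg a, pow_nonneg hw 5]
    _ ≤ 1 * (‖v‖ * 1) * w ^ 3 := by gcongr
    _ = ‖v‖ * w ^ 3 := by ring

lemma pow_three_le_of_le_of_mul_le_one {w r D : ℝ} (hw : 0 ≤ w) (hr : 0 ≤ r) (hwD : w ≤ D)
    (hrw : r * w ≤ 1) : w ^ 3 ≤ 4 * (D ^ 3 + 1) * (1 + r) ^ (-(3 : ℝ)) := by
  have hD : 0 ≤ D := hw.trans hwD
  have hcube : (w * (1 + r)) ^ 3 ≤ 4 * (D ^ 3 + 1) :=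
    calc (w * (1 + r)) ^ 3 ≤ (D + 1) ^ 3 := by gcongr; nlinarith
      _ ≤ 2 ^ (3 - 1) * (D ^ 3 + 1 ^ 3) := add_pow_le hD zero_le_one 3
      _ = 4 * (D ^ 3 + 1) := by norm_num
  rw [rpow_neg (by positivity), ← div_eq_mul_inv, le_div_iff₀ (by positivity)]
  norm_cast
  rwa [← mul_pow]

lemma transport_kernel_le {f g : E2 → ℝ} {Sf Sg D : ℝ} (hSf : ∀ x, ‖gradient f x‖ ≤ Sf)
    (hSg : ∀ x, ‖gradient g x‖ ≤ Sg) (hD : ∀ x y, dd f g x y ≤ D) (x y : E2) :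
    |f x - g (x - y)| * |⟪gradient f x - gradient g (x - y), y⟫| /
        (‖y‖ ^ 2 + (f x - g (x - y)) ^ 2) ^ (5 / 2 : ℝ) ≤
      4 * (Sf + Sg) * (D ^ 3 + 1) * (1 + ‖y‖) ^ (-(3 : ℝ)) := by
  have hw : 0 ≤ dd f g x y := by unfold dd; positivity
  have hyw : ‖y‖ * dd f g x y ≤ 1 := by
    simpa only [dd, abs_norm] using abs_mul_rpow_neg_half_le_one ‖y‖ (f x - g (x - y))
  have hgrad : ‖gradient f x - gradient g (x - y)‖ ≤ Sf + Sg :=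
    (norm_sub_le _ _).trans (add_le_add (hSf x) (hSg (x - y)))
  calc _ ≤ ‖gradient f x - gradient g (x - y)‖ * dd f g x y ^ 3 :=
        abs_mul_abs_inner_div_rpow_le _ _ _
    _ ≤ (Sf + Sg) * (4 * (D ^ 3 + 1) * (1 + ‖y‖) ^ (-(3 : ℝ))) :=
        mul_le_mul hgrad (pow_three_le_of_le_of_mul_le_one hw (norm_nonneg y) (hD x y) hyw)
          (by positivity) ((norm_nonneg _).trans hgrad)
    _ = _ := by ring

lemma lintegral_lintegral_ofReal_le_of_le_mul {α β : Type*} [MeasurableSpace α]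
    [MeasurableSpace β] {μ : Measure α} {ν : Measure β} {F : α → ℝ} {G : β → ℝ}
    (hF : Integrable F μ) (hG : Integrable G ν) (hF0 : 0 ≤ F) (hG0 : 0 ≤ G) {K : β → α → ℝ}
    (hK : ∀ y x, K y x ≤ F x * G y) :
    ∫⁻ y, ∫⁻ x, ENNReal.ofReal (K y x) ∂μ ∂ν ≤ ENNReal.ofReal ((∫ x, F x ∂μ) * ∫ y, G y ∂ν) := by
  calc ∫⁻ y, ∫⁻ x, ENNReal.ofReal (K y x) ∂μ ∂ν
      ≤ ∫⁻ y, ∫⁻ x, ENNReal.ofReal (F x) * ENNReal.ofReal (G y) ∂μ ∂ν := by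
        gcongr with y x
        rw [← ENNReal.ofReal_mul (hF0 x)]
        exact ENNReal.ofReal_le_ofReal (hK y x)
    _ = (∫⁻ x, ENNReal.ofReal (F x) ∂μ) * ∫⁻ y, ENNReal.ofReal (G y) ∂ν := by
        simp_rw [lintegral_mul_const' _ _ ENNReal.ofReal_ne_top]
        rw [← ofReal_integral_eq_lintegral_ofReal hF (ae_of_all _ hF0)]
        exact lintegral_const_mul' _ _ ENNReal.ofReal_ne_top
    _ = _ := by
        rw [← ofReal_integral_eq_lintegral_ofReal hF (ae_of_all _ hF0),
          ← ofReal_integral_eq_lintegral_ofReal hG (ae_of_all _ hG0),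
          ENNReal.ofReal_mul (integral_nonneg hF0)]

lemma l2norm_sq (h : E2 → ℝ) : l2norm h ^ 2 = ∫ x, h x ^ 2 := by
  rw [l2norm, ← rpow_natCast, ← rpow_mul (integral_nonneg fun x => sq_nonneg (h x))]
  norm_num

lemma integrable_one_add_norm_rpow_neg_three :
    Integrable fun y : E2 => (1 + ‖y‖) ^ (-(3 : ℝ)) := by
  apply integrable_one_add_norm
  norm_num [finrank_euclideanSpace_fin]

/-- **Highest-order transport-type estimate.**  There is a universal constant `C` such that
whenever `f, g` are differentiable with bounded gradients, `D = sup d(f,g) < ∞`, and the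
fourth partial derivative `∂⁴_{x₁} f` exists and lies in `L²`,
`∫∫ |∂⁴_{x₁}f(x)|² |f(x)-g(x-y)| |(∇f(x)-∇g(x-y))⬝y| / [|y|²+(f(x)-g(x-y))²]^{5/2} dx dy
  ≤ C ‖∂⁴_{x₁}f‖²_{L²} (sup|∇f| + sup|∇g|)(D³+1)`. -/
theorem highest_order_transport_estimate :
    ∃ C : ℝ, 0 < C ∧ ∀ f g : E2 → ℝ,
      Differentiable ℝ f → Differentiable ℝ g →
      Differentiable ℝ (pd1 f) → Differentiable ℝ (pd1 (pd1 f)) →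
      Differentiable ℝ (pd1 (pd1 (pd1 f))) →
      BddAbove (Set.range fun x => ‖gradient f x‖) →
      BddAbove (Set.range fun x => ‖gradient g x‖) →
      BddAbove (Set.range fun p : E2 × E2 => dd f g p.1 p.2) →
      MemLp (pd1four f) 2 volume →
      (∫⁻ y : E2, ∫⁻ x : E2, ENNReal.ofReal
          (|pd1four f x| ^ 2 * (|f x - g (x - y)| *
            |⟪gradient f x - gradient g (x - y), y⟫|) /
            (‖y‖ ^ 2 + (f x - g (x - y)) ^ 2) ^ (5 / 2 : ℝ))) ≤
        ENNReal.ofReal (C * l2norm (pd1four f) ^ 2 *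
          ((⨆ x : E2, ‖gradient f x‖) + ⨆ x : E2, ‖gradient g x‖) *
          ((⨆ p : E2 × E2, dd f g p.1 p.2) ^ 3 + 1)) := by
  set I := ∫ y : E2, (1 + ‖y‖) ^ (-(3 : ℝ))
  have hI : 0 ≤ I := integral_nonneg fun y => by positivity
  refine ⟨4 * (I + 1), by positivity, fun f g _ _ _ _ _ hbf hbg hbd hmem => ?_⟩
  set Sf := ⨆ x : E2, ‖gradient f x‖
  set Sg := ⨆ x : E2, ‖gradient g x‖
  set D := ⨆ p : E2 × E2, dd f g p.1 p.2
  have hSf : ∀ x, ‖gradient f x‖ ≤ Sf := le_ciSup hbf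
  have hSg : ∀ x, ‖gradient g x‖ ≤ Sg := le_ciSup hbg
  have hD : ∀ x y, dd f g x y ≤ D := fun x y => le_ciSup hbd (x, y)
  have hK : 0 ≤ 4 * (Sf + Sg) * (D ^ 3 + 1) := by
    have := (hSf 0).trans' (norm_nonneg _)
    have := (hSg 0).trans' (norm_nonneg _)
    have := (hD 0 0).trans' (by unfold dd; positivity)
    positivity
  calc _ ≤ ENNReal.ofReal ((∫ x, pd1four f x ^ 2) *
        ∫ y : E2, 4 * (Sf + Sg) * (D ^ 3 + 1) * (1 + ‖y‖) ^ (-(3 : ℝ))) := by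
        refine lintegral_lintegral_ofReal_le_of_le_mul hmem.integrable_sq
          (integrable_one_add_norm_rpow_neg_three.const_mul _)
          (fun x => sq_nonneg _) (fun y => by positivity) fun y x => ?_
        rw [sq_abs, mul_div_assoc]
        exact mul_le_mul_of_nonneg_left (transport_kernel_le hSf hSg hD x y) (sq_nonneg _)
    _ ≤ _ := by
        rw [integral_const_mul, l2norm_sq]
        have hF : 0 ≤ ∫ x, pd1four f x ^ 2 := integral_nonneg fun x => sq_nonneg _
        refine ENNReal.ofReal_le_ofReal ?_
        nlinarith [mul_nonneg hF hK]
end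
end

section
/- Highest-order interaction estimate: Let $f, g : \mathbb{R}^2 \to \mathbb{R}$ be differentiable with $\nabla f$ bounded, $D := \sup_{x,y} d(f,g)(x,y) < \infty$, and suppose $\partial_{x_1}^4 f, \partial_{x_1}^4 g \in L^2(\mathbb{R}^2)$. Then there is a universal constant $C$ such that $\int_{\mathbb{R}^2} \int_{\mathbb{R}^2} |\partial_{x_1}^4 f(x)| \, \frac{|\nabla f(x) \cdot y| \, |f(x) - g(x-y)| \, \big(|\partial_{x_1}^4 f(x)| + |\partial_{x_1}^4 g(x-y)|\big)}{[|y|^2 + (f(x) - g(x-y))^2]^{5/2}}\, dx\, dy \le C\, \|\partial_{x_1}^4 f\|_{L^2} \, \sup_x|\nabla f(x)| \, \big(\|\partial_{x_1}^4 f\|_{L^2} + \|\partial_{x_1}^4 g\|_{L^2}\big)(D^3 + 1)$. -/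
open MeasureTheory Filter Topology Real Set
open scoped RealInnerProductSpace ENNReal

noncomputable section

/-!
With `M = sup |∇f|`, the bounds `|∇f(x)·y| ≤ M|y|` and
`|y||f(x) - g(x-y)| ≤ |y|² + (f(x) - g(x-y))²` reduce the kernel to
`M [|y|² + (f(x) - g(x-y))²]^{-3/2} ≤ M min(D³, |y|⁻³)`, which no longer depends on `x`.
For fixed `y`, Cauchy–Schwarz and translation invariance of Lebesgue measure bound the remaining
`x`-integral by `‖∂⁴f‖ (‖∂⁴f‖ + ‖∂⁴g‖)`. Finally `min(D³, |y|⁻³) ≤ 8 (D³ + 1) (1 + |y|)⁻³`,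
which is integrable on `ℝ²` because `3 > 2`.
-/

lemma mul_abs_div_rpow_five_halves_le {t Δ D : ℝ} (ht : 0 ≤ t)
    (hD : (t ^ 2 + Δ ^ 2) ^ (-(1 / 2 : ℝ)) ≤ D) :
    t * |Δ| / (t ^ 2 + Δ ^ 2) ^ (5 / 2 : ℝ) ≤ min (D ^ 3) (t ^ (-3 : ℝ)) := by
  set A := t ^ 2 + Δ ^ 2
  have hA0 : 0 ≤ A := by positivity
  rcases ht.eq_or_lt with rfl | htpos
  · have hD0 : 0 ≤ D := (Real.rpow_nonneg hA0 _).trans hD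
    simp only [zero_mul, zero_div]
    exact le_min (by positivity) (Real.rpow_nonneg le_rfl _)
  have htA : t ^ 2 ≤ A := le_add_of_nonneg_right (sq_nonneg Δ)
  have hApos : 0 < A := by positivity
  calc t * |Δ| / A ^ (5 / 2 : ℝ) ≤ A / A ^ (5 / 2 : ℝ) := by
        gcongr
        nlinarith [two_mul_le_add_sq t |Δ|, sq_abs Δ, abs_nonneg Δ]
    _ = A ^ (-(3 / 2) : ℝ) := by
        rw [show (-(3 / 2) : ℝ) = 1 - 5 / 2 by norm_num, Real.rpow_sub hApos, Real.rpow_one]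
    _ ≤ min (D ^ 3) (t ^ (-3 : ℝ)) := by
        refine le_min ?_ ?_
        · rw [show (-(3 / 2) : ℝ) = (-(1 / 2)) * (3 : ℕ) by norm_num, Real.rpow_mul hA0,
            Real.rpow_natCast]
          gcongr
        · calc A ^ (-(3 / 2) : ℝ) ≤ (t ^ 2) ^ (-(3 / 2) : ℝ) :=
                Real.rpow_le_rpow_of_nonpos (by positivity) htA (by norm_num)
            _ = t ^ (-3 : ℝ) := by
                rw [← Real.rpow_natCast t 2, ← Real.rpow_mul ht]; norm_num

lemma min_le_two_rpow_mul_one_add_rpow_neg {a t r : ℝ} (ha : 0 ≤ a) (ht : 0 ≤ t) (hr : 0 ≤ r) :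
    min a (t ^ (-r)) ≤ (a + 1) * 2 ^ r * (1 + t) ^ (-r) := by
  rcases le_total t 1 with ht1 | ht1
  · have : 1 ≤ 2 ^ r * (1 + t) ^ (-r) := by
      calc (1 : ℝ) = 2 ^ r * 2 ^ (-r) := by rw [← Real.rpow_add two_pos]; simp
        _ ≤ 2 ^ r * (1 + t) ^ (-r) := mul_le_mul_of_nonneg_left
          (Real.rpow_le_rpow_of_nonpos (by positivity) (by linarith) (by linarith))
          (by positivity)
    calc min a (t ^ (-r)) ≤ a + 1 := (min_le_left _ _).trans (by linarith)
      _ ≤ (a + 1) * (2 ^ r * (1 + t) ^ (-r)) := le_mul_of_one_le_right (by positivity) this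
      _ = _ := by ring
  · calc min a (t ^ (-r)) ≤ t ^ (-r) := min_le_right _ _
      _ = 2 ^ r * (2 * t) ^ (-r) := by
          rw [Real.mul_rpow zero_le_two ht, ← mul_assoc, ← Real.rpow_add two_pos]; simp
      _ ≤ 2 ^ r * (1 + t) ^ (-r) := mul_le_mul_of_nonneg_left
          (Real.rpow_le_rpow_of_nonpos (by positivity) (by linarith) (by linarith)) (by positivity)
      _ ≤ (a + 1) * 2 ^ r * (1 + t) ^ (-r) := by
          rw [mul_assoc]
          exact le_mul_of_one_le_left (by positivity) (by linarith)

lemma lintegral_ofReal_min_rpow_neg_le {E : Type*} [NormedAddCommGroup E] [NormedSpace ℝ E]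
    [FiniteDimensional ℝ E] [MeasurableSpace E] [BorelSpace E] {μ : Measure E}
    [μ.IsAddHaarMeasure] {a r : ℝ} (ha : 0 ≤ a) (hr : (Module.finrank ℝ E : ℝ) < r) :
    ∫⁻ y, ENNReal.ofReal (min a (‖y‖ ^ (-r))) ∂μ ≤
      ENNReal.ofReal ((a + 1) * 2 ^ r * ∫ y, (1 + ‖y‖) ^ (-r) ∂μ) := by
  have hr0 : 0 ≤ r := (Nat.cast_nonneg _).trans hr.le
  rw [← integral_const_mul, ofReal_integral_eq_lintegral_ofReal
    ((integrable_one_add_norm hr).const_mul _) (ae_of_all _ fun y => by positivity)]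
  exact lintegral_mono fun y => ENNReal.ofReal_le_ofReal
    (min_le_two_rpow_mul_one_add_rpow_neg ha (norm_nonneg y) hr0)

lemma integral_one_add_norm_rpow_neg_pos {E : Type*} [NormedAddCommGroup E] [NormedSpace ℝ E]
    [FiniteDimensional ℝ E] [MeasurableSpace E] [BorelSpace E] {μ : Measure E}
    [μ.IsAddHaarMeasure] {r : ℝ} (hr : (Module.finrank ℝ E : ℝ) < r) :
    0 < ∫ y, (1 + ‖y‖) ^ (-r) ∂μ := by
  have hcont : Continuous fun y : E => (1 + ‖y‖) ^ (-r) :=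
    (continuous_const.add continuous_norm).rpow_const fun y =>
      Or.inl (by positivity : (0 : ℝ) < 1 + ‖y‖).ne'
  exact integral_pos_of_integrable_nonneg_nonzero (x := 0) hcont (integrable_one_add_norm hr)
    (fun y => by positivity) (by simp)

lemma lintegral_enorm_mul_enorm_le_eLpNorm_two {α : Type*} [MeasurableSpace α] {μ : Measure α}
    {f g : α → ℝ} (hf : AEStronglyMeasurable f μ) (hg : AEStronglyMeasurable g μ) :
    ∫⁻ x, ‖f x‖ₑ * ‖g x‖ₑ ∂μ ≤ eLpNorm f 2 μ * eLpNorm g 2 μ := by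
  simpa [eLpNorm_one_eq_lintegral_enorm] using
    eLpNorm_le_eLpNorm_mul_eLpNorm'_of_norm (p := 2) (q := 2) (r := 1) hf hg (· * ·) 1
      (ae_of_all _ fun x => by simp [norm_mul])

lemma lintegral_enorm_mul_enorm_add_enorm_sub_le {G : Type*} [MeasurableSpace G] [AddGroup G]
    [MeasurableAdd G] {μ : Measure G} [μ.IsAddRightInvariant] {F H : G → ℝ}
    (hF : AEStronglyMeasurable F μ) (hH : AEStronglyMeasurable H μ) (y : G) :
    ∫⁻ x, ‖F x‖ₑ * (‖F x‖ₑ + ‖H (x - y)‖ₑ) ∂μ ≤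
      eLpNorm F 2 μ * (eLpNorm F 2 μ + eLpNorm H 2 μ) := by
  have hshift : MeasurePreserving (· - y) μ μ := measurePreserving_sub_right μ y
  simp_rw [mul_add]
  rw [lintegral_add_left' (f := fun x => ‖F x‖ₑ * ‖F x‖ₑ) (hF.enorm.mul hF.enorm)]
  gcongr
  · exact lintegral_enorm_mul_enorm_le_eLpNorm_two hF hF
  · rw [← eLpNorm_comp_measurePreserving hH hshift]
    exact lintegral_enorm_mul_enorm_le_eLpNorm_two hF (hH.comp_measurePreserving hshift)

lemma l2norm_nonneg (h : E2 → ℝ) : 0 ≤ l2norm h :=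
  Real.rpow_nonneg (integral_nonneg fun _ => sq_nonneg _) _

lemma ofReal_l2norm {h : E2 → ℝ} (hh : MemLp h 2 volume) :
    ENNReal.ofReal (l2norm h) = eLpNorm h 2 volume := by
  rw [hh.eLpNorm_eq_integral_rpow_norm two_ne_zero ENNReal.ofNat_ne_top, l2norm]
  simp [Real.norm_eq_abs, sq_abs]

lemma ofReal_interaction_integrand_le {E : Type*} [NormedAddCommGroup E] [InnerProductSpace ℝ E]
    {v y : E} {Δ a b M D : ℝ} (hv : ‖v‖ ≤ M)
    (hD : (‖y‖ ^ 2 + Δ ^ 2) ^ (-(1 / 2 : ℝ)) ≤ D) :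
    ENNReal.ofReal (|a| * (|⟪v, y⟫| * |Δ| * (|a| + |b|)) / (‖y‖ ^ 2 + Δ ^ 2) ^ (5 / 2 : ℝ)) ≤
      ENNReal.ofReal (M * min (D ^ 3) (‖y‖ ^ (-3 : ℝ))) * (‖a‖ₑ * (‖a‖ₑ + ‖b‖ₑ)) := by
  have hM0 : 0 ≤ M := (norm_nonneg v).trans hv
  rw [Real.enorm_eq_ofReal_abs, Real.enorm_eq_ofReal_abs, ← ENNReal.ofReal_add (abs_nonneg _)
    (abs_nonneg _), ← ENNReal.ofReal_mul (abs_nonneg _), ← ENNReal.ofReal_mul' (by positivity)]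
  refine ENNReal.ofReal_le_ofReal ?_
  have hinner : |⟪v, y⟫| ≤ M * ‖y‖ :=
    (abs_real_inner_le_norm v y).trans (mul_le_mul_of_nonneg_right hv (norm_nonneg y))
  calc |a| * (|⟪v, y⟫| * |Δ| * (|a| + |b|)) / (‖y‖ ^ 2 + Δ ^ 2) ^ (5 / 2 : ℝ)
      = |⟪v, y⟫| * |Δ| / (‖y‖ ^ 2 + Δ ^ 2) ^ (5 / 2 : ℝ) * (|a| * (|a| + |b|)) := by ring
    _ ≤ M * ‖y‖ * |Δ| / (‖y‖ ^ 2 + Δ ^ 2) ^ (5 / 2 : ℝ) * (|a| * (|a| + |b|)) := by gcongr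
    _ = M * (‖y‖ * |Δ| / (‖y‖ ^ 2 + Δ ^ 2) ^ (5 / 2 : ℝ)) * (|a| * (|a| + |b|)) := by ring
    _ ≤ M * min (D ^ 3) (‖y‖ ^ (-3 : ℝ)) * (|a| * (|a| + |b|)) := by
        gcongr
        exact mul_abs_div_rpow_five_halves_le (norm_nonneg y) hD

lemma lintegral_interaction_integrand_le {f g F G : E2 → ℝ} {V : E2 → E2} {M D : ℝ} {y : E2}
    (hV : ∀ x, ‖V x‖ ≤ M) (hD : ∀ x, dd f g x y ≤ D)
    (hF : MemLp F 2 volume) (hG : MemLp G 2 volume) :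
    ∫⁻ x, ENNReal.ofReal (|F x| * (|⟪V x, y⟫| * |f x - g (x - y)| * (|F x| + |G (x - y)|)) /
        (‖y‖ ^ 2 + (f x - g (x - y)) ^ 2) ^ (5 / 2 : ℝ)) ≤
      ENNReal.ofReal (M * min (D ^ 3) (‖y‖ ^ (-3 : ℝ))) *
        ENNReal.ofReal (l2norm F * (l2norm F + l2norm G)) := by
  rw [ENNReal.ofReal_mul (l2norm_nonneg _), ENNReal.ofReal_add (l2norm_nonneg _)
    (l2norm_nonneg _), ofReal_l2norm hF, ofReal_l2norm hG]
  calc _ ≤ ∫⁻ x, ENNReal.ofReal (M * min (D ^ 3) (‖y‖ ^ (-3 : ℝ))) *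
          (‖F x‖ₑ * (‖F x‖ₑ + ‖G (x - y)‖ₑ)) :=
        lintegral_mono fun x => ofReal_interaction_integrand_le (hV x) (hD x)
    _ = ENNReal.ofReal (M * min (D ^ 3) (‖y‖ ^ (-3 : ℝ))) *
          ∫⁻ x, ‖F x‖ₑ * (‖F x‖ₑ + ‖G (x - y)‖ₑ) :=
        lintegral_const_mul' _ _ ENNReal.ofReal_ne_top
    _ ≤ _ := by
        gcongr
        exact lintegral_enorm_mul_enorm_add_enorm_sub_le hF.1 hG.1 y

/-- **Highest-order interaction estimate.**  There is a universal constant `C` such that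
whenever `f, g` are differentiable, `∇f` is bounded, `D = sup d(f,g) < ∞`, and
`∂⁴_{x₁}f, ∂⁴_{x₁}g ∈ L²`,
`∫∫ |∂⁴_{x₁}f(x)| |∇f(x)⬝y| |f(x)-g(x-y)| (|∂⁴_{x₁}f(x)|+|∂⁴_{x₁}g(x-y)|) /
    [|y|²+(f(x)-g(x-y))²]^{5/2} dx dy
  ≤ C ‖∂⁴_{x₁}f‖_{L²} sup|∇f| (‖∂⁴_{x₁}f‖_{L²}+‖∂⁴_{x₁}g‖_{L²})(D³+1)`. -/
theorem highest_order_interaction_estimate :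
    ∃ C : ℝ, 0 < C ∧ ∀ f g : E2 → ℝ,
      Differentiable ℝ f → Differentiable ℝ g →
      Differentiable ℝ (pd1 f) → Differentiable ℝ (pd1 (pd1 f)) →
      Differentiable ℝ (pd1 (pd1 (pd1 f))) →
      Differentiable ℝ (pd1 g) → Differentiable ℝ (pd1 (pd1 g)) →
      Differentiable ℝ (pd1 (pd1 (pd1 g))) →
      BddAbove (Set.range fun x => ‖gradient f x‖) →
      BddAbove (Set.range fun p : E2 × E2 => dd f g p.1 p.2) →
      MemLp (pd1four f) 2 volume → MemLp (pd1four g) 2 volume →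
      (∫⁻ y : E2, ∫⁻ x : E2, ENNReal.ofReal
          (|pd1four f x| * (|⟪gradient f x, y⟫| * |f x - g (x - y)| *
            (|pd1four f x| + |pd1four g (x - y)|)) /
            (‖y‖ ^ 2 + (f x - g (x - y)) ^ 2) ^ (5 / 2 : ℝ))) ≤
        ENNReal.ofReal (C * l2norm (pd1four f) * (⨆ x : E2, ‖gradient f x‖) *
          (l2norm (pd1four f) + l2norm (pd1four g)) *
          ((⨆ p : E2 × E2, dd f g p.1 p.2) ^ 3 + 1)) := by
  have hdim : (Module.finrank ℝ E2 : ℝ) < 3 := by norm_num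
  have hK := integral_one_add_norm_rpow_neg_pos (μ := volume) hdim
  refine ⟨2 ^ (3 : ℝ) * ∫ y : E2, (1 + ‖y‖) ^ (-3 : ℝ), by positivity,
    fun f g _ _ _ _ _ _ _ _ hM hD hF hG => ?_⟩
  set M := ⨆ x, ‖gradient f x‖
  set D := ⨆ p : E2 × E2, dd f g p.1 p.2
  have hMx : ∀ x, ‖gradient f x‖ ≤ M := le_ciSup hM
  have hDxy : ∀ x y, dd f g x y ≤ D := fun x y => le_ciSup hD (x, y)
  have hM0 : 0 ≤ M := (norm_nonneg _).trans (hMx 0)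
  have hD0 : 0 ≤ D := (Real.rpow_nonneg (by positivity) _).trans (hDxy 0 0)
  set N := l2norm (pd1four f) * (l2norm (pd1four f) + l2norm (pd1four g))
  calc _ ≤ ∫⁻ y, ENNReal.ofReal (M * min (D ^ 3) (‖y‖ ^ (-3 : ℝ))) * ENNReal.ofReal N :=
        lintegral_mono fun y => lintegral_interaction_integrand_le hMx (hDxy · y) hF hG
    _ = ENNReal.ofReal M * (∫⁻ y, ENNReal.ofReal (min (D ^ 3) (‖y‖ ^ (-3 : ℝ)))) *
          ENNReal.ofReal N := by
        simp_rw [ENNReal.ofReal_mul hM0]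
        rw [lintegral_mul_const' _ _ ENNReal.ofReal_ne_top,
          lintegral_const_mul' _ _ ENNReal.ofReal_ne_top]
    _ ≤ ENNReal.ofReal M * ENNReal.ofReal ((D ^ 3 + 1) * 2 ^ (3 : ℝ) *
          ∫ y : E2, (1 + ‖y‖) ^ (-3 : ℝ)) * ENNReal.ofReal N := by
        gcongr
        exact lintegral_ofReal_min_rpow_neg_le (by positivity) hdim
    _ = _ := by
        rw [← ENNReal.ofReal_mul hM0, ← ENNReal.ofReal_mul (by positivity)]
        congr 1
        ring
end
end
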